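/- For pointed types K and X and n ≥ 1, there is a pointed equivalence (K ∧ X)^{∧n} ≃ K^{∧n} ∧ X^{∧n} which is equivariant for the actions of Perm(Fin n) permuting the smash factors on both sides. -/

import Mathlib

/-!
Both sides are quotients of `(K × X)^n`: a tuple of pairs `(kᵢ, xᵢ)` goes to the class of
`(kᵢ ∧ xᵢ)ᵢ` on the left and to the class of `(kᵢ)ᵢ ∧ (xᵢ)ᵢ` on the right. In both quotients
two tuples are identified exactly when they are equal or both have some `kᵢ = k0` or some
`xᵢ = x0`. Two surjections with the same fibres induce an equivalence of their targets,
and it is equivariant because both quotient maps commute with permuting coordinates.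
-/

/-- The smash product of two pointed types `(A, a0)` and `(B, b0)`: the product with the
wedge `A ∨ B` collapsed to a point. -/
def Smash (A : Type*) (B : Type*) (a0 : A) (b0 : B) : Type _ :=
  Quot (fun p q : A × B => p = q ∨
    ((p.1 = a0 ∨ p.2 = b0) ∧ (q.1 = a0 ∨ q.2 = b0)))

/-- The basepoint of the smash product. -/
def Smash.pt {A : Type*} {B : Type*} (a0 : A) (b0 : B) : Smash A B a0 b0 :=
  Quot.mk _ (a0, b0)

/-- The map of smash products induced by a pair of pointed maps. -/
def Smash.map {A B A' B' : Type*} {a0 : A} {b0 : B} {a0' : A'} {b0' : B'}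
    (f : A → A') (g : B → B') (hf : f a0 = a0') (hg : g b0 = b0') :
    Smash A B a0 b0 → Smash A' B' a0' b0' :=
  Quot.map (fun p => (f p.1, g p.2)) (by
    rintro p q (rfl | ⟨h1, h2⟩)
    · exact Or.inl rfl
    · refine Or.inr ⟨?_, ?_⟩
      · rcases h1 with h | h
        · exact Or.inl (by simp [h, hf])
        · exact Or.inr (by simp [h, hg])
      · rcases h2 with h | h
        · exact Or.inl (by simp [h, hf])
        · exact Or.inr (by simp [h, hg]))

/-- The `n`-fold smash power of a pointed type `(K, k0)`: the quotient of `K^n`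
collapsing all tuples having some coordinate equal to the basepoint. -/
def SmashPow (K : Type*) (k0 : K) (n : ℕ) : Type _ :=
  Quot (fun p q : Fin n → K => p = q ∨ ((∃ i, p i = k0) ∧ (∃ i, q i = k0)))

/-- The basepoint of the smash power. -/
def SmashPow.pt (K : Type*) (k0 : K) (n : ℕ) : SmashPow K k0 n :=
  Quot.mk _ (fun _ => k0)

/-- The action of a permutation of `Fin n` on the `n`-fold smash power, permuting
the smash factors. -/
def SmashPow.perm {K : Type*} {k0 : K} {n : ℕ} (σ : Equiv.Perm (Fin n)) :
    SmashPow K k0 n → SmashPow K k0 n :=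
  Quot.map (fun p => p ∘ σ) (by
    rintro p q (rfl | ⟨⟨i, hi⟩, ⟨j, hj⟩⟩)
    · exact Or.inl rfl
    · exact Or.inr ⟨⟨σ.symm i, by simpa using hi⟩, ⟨σ.symm j, by simpa using hj⟩⟩)

theorem SmashPow.perm_pt {K : Type*} (k0 : K) (n : ℕ) (σ : Equiv.Perm (Fin n)) :
    SmashPow.perm σ (SmashPow.pt K k0 n) = SmashPow.pt K k0 n := rfl


theorem Quot.mk_eq_mk_iff_eq_or_and {α : Type*} (Bad : α → Prop) {p q : α} :
    Quot.mk (fun p q => p = q ∨ (Bad p ∧ Bad q)) p = Quot.mk _ q ↔ p = q ∨ (Bad p ∧ Bad q) :=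
  Quot.eq.trans <| Equivalence.eqvGen_iff
    { refl := fun _ => .inl rfl
      symm := fun h => h.imp Eq.symm And.symm
      trans := by
        rintro _ _ _ (rfl | h₁) (rfl | h₂)
        exacts [.inl rfl, .inr h₂, .inr h₁, .inr ⟨h₁.1, h₂.2⟩] }

noncomputable def Equiv.ofSurjectiveOfEqIff {α β γ : Type*} (f : α → β) (g : α → γ)
    (hf : f.Surjective) (hg : g.Surjective) (h : ∀ a b, f a = f b ↔ g a = g b) : β ≃ γ where
  toFun b := g (f.surjInv hf b)
  invFun c := f (g.surjInv hg c)
  left_inv b := ((h _ _).2 (Function.surjInv_eq hg _)).trans (Function.surjInv_eq hf b)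
  right_inv c := ((h _ _).1 (Function.surjInv_eq hf _)).trans (Function.surjInv_eq hg c)

theorem Equiv.ofSurjectiveOfEqIff_apply {α β γ : Type*} {f : α → β} {g : α → γ}
    {hf : f.Surjective} {hg : g.Surjective} {h : ∀ a b, f a = f b ↔ g a = g b} (a : α) :
    Equiv.ofSurjectiveOfEqIff f g hf hg h (f a) = g a :=
  (h _ _).1 (Function.surjInv_eq hf (f a))

namespace Smash

variable {A B : Type*} {a0 : A} {b0 : B}

def mk (p : A × B) : Smash A B a0 b0 :=
  Quot.mk _ p

theorem mk_surjective : (mk : A × B → Smash A B a0 b0).Surjective :=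
  Quot.mk_surjective

theorem mk_eq_mk_iff {p q : A × B} :
    (mk p : Smash A B a0 b0) = mk q ↔
      p = q ∨ ((p.1 = a0 ∨ p.2 = b0) ∧ (q.1 = a0 ∨ q.2 = b0)) :=
  Quot.mk_eq_mk_iff_eq_or_and (fun p : A × B => p.1 = a0 ∨ p.2 = b0)

theorem mk_eq_pt_iff {p : A × B} : (mk p : Smash A B a0 b0) = pt a0 b0 ↔ p.1 = a0 ∨ p.2 = b0 :=
  mk_eq_mk_iff.trans ⟨by rintro (rfl | ⟨h, -⟩) <;> simp_all, fun h => .inr ⟨h, .inl rfl⟩⟩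

end Smash

namespace SmashPow

variable {K : Type*} {k0 : K} {n : ℕ}

def mk (p : Fin n → K) : SmashPow K k0 n :=
  Quot.mk _ p

theorem mk_surjective : (mk : (Fin n → K) → SmashPow K k0 n).Surjective :=
  Quot.mk_surjective

theorem mk_eq_mk_iff {p q : Fin n → K} :
    (mk p : SmashPow K k0 n) = mk q ↔ p = q ∨ ((∃ i, p i = k0) ∧ (∃ i, q i = k0)) :=
  Quot.mk_eq_mk_iff_eq_or_and (fun p : Fin n → K => ∃ i, p i = k0)

theorem mk_eq_pt_iff (hn : 1 ≤ n) {p : Fin n → K} :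
    (mk p : SmashPow K k0 n) = pt K k0 n ↔ ∃ i, p i = k0 :=
  mk_eq_mk_iff.trans
    ⟨by rintro (rfl | ⟨h, -⟩); exacts [⟨⟨0, hn⟩, rfl⟩, h], fun h => .inr ⟨h, ⟨0, hn⟩, rfl⟩⟩

end SmashPow

section SmashPowSmash

variable {K X : Type*} (k0 : K) (x0 : X) (n : ℕ)

def HasBaseCoord (f : Fin n → K × X) : Prop :=
  ∃ i, (f i).1 = k0 ∨ (f i).2 = x0

def smashPowSmashMk (f : Fin n → K × X) : SmashPow (Smash K X k0 x0) (Smash.pt k0 x0) n :=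
  SmashPow.mk fun i => Smash.mk (f i)

def smashSmashPowMk (f : Fin n → K × X) :
    Smash (SmashPow K k0 n) (SmashPow X x0 n) (SmashPow.pt K k0 n) (SmashPow.pt X x0 n) :=
  Smash.mk (SmashPow.mk (Prod.fst ∘ f), SmashPow.mk (Prod.snd ∘ f))

theorem smashPowSmashMk_surjective : (smashPowSmashMk k0 x0 n).Surjective :=
  SmashPow.mk_surjective.comp (Function.Surjective.piMap fun _ => Smash.mk_surjective)

theorem smashSmashPowMk_surjective : (smashSmashPowMk k0 x0 n).Surjective := by
  rintro ⟨⟨p⟩, ⟨q⟩⟩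
  exact ⟨fun i => (p i, q i), rfl⟩

variable {k0 x0 n}

theorem smashPowSmashMk_eq_iff {f g : Fin n → K × X} :
    smashPowSmashMk k0 x0 n f = smashPowSmashMk k0 x0 n g ↔
      f = g ∨ (HasBaseCoord k0 x0 n f ∧ HasBaseCoord k0 x0 n g) := by
  simp only [smashPowSmashMk, SmashPow.mk_eq_mk_iff, Smash.mk_eq_pt_iff, funext_iff,
    Smash.mk_eq_mk_iff]
  refine ⟨fun h => h.elim (fun hfg => ?_) .inr, fun h => h.imp (fun hfg x => .inl (hfg x)) id⟩
  by_cases hfg' : ∀ x, f x = g x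
  · exact .inl hfg'
  · obtain ⟨x, hx⟩ := not_forall.1 hfg'
    obtain ⟨hf, hg⟩ := (hfg x).resolve_left hx
    exact .inr ⟨⟨x, hf⟩, ⟨x, hg⟩⟩

theorem smashSmashPowMk_eq_iff (hn : 1 ≤ n) {f g : Fin n → K × X} :
    smashSmashPowMk k0 x0 n f = smashSmashPowMk k0 x0 n g ↔
      f = g ∨ (HasBaseCoord k0 x0 n f ∧ HasBaseCoord k0 x0 n g) := by
  simp only [smashSmashPowMk, Smash.mk_eq_mk_iff, SmashPow.mk_eq_pt_iff hn,
    SmashPow.mk_eq_mk_iff, Prod.ext_iff, funext_iff, Function.comp_apply, forall_and,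
    HasBaseCoord, exists_or]
  tauto

theorem smashPowSmashMk_comp_perm (σ : Equiv.Perm (Fin n)) (f : Fin n → K × X) :
    SmashPow.perm σ (smashPowSmashMk k0 x0 n f) = smashPowSmashMk k0 x0 n (f ∘ σ) :=
  rfl

theorem smashSmashPowMk_comp_perm (σ : Equiv.Perm (Fin n)) (f : Fin n → K × X) :
    Smash.map (SmashPow.perm σ) (SmashPow.perm σ) (SmashPow.perm_pt k0 n σ)
        (SmashPow.perm_pt x0 n σ) (smashSmashPowMk k0 x0 n f) =
      smashSmashPowMk k0 x0 n (f ∘ σ) :=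
  rfl

end SmashPowSmash

/-- For pointed types `K`, `X` and `n ≥ 1`, there is a pointed equivalence
`(K ∧ X)^{∧n} ≃ K^{∧n} ∧ X^{∧n}` which is equivariant for the permutation actions of
`Perm (Fin n)` on both sides. -/
theorem smashPow_of_smash_equiv (K X : Type*) (k0 : K) (x0 : X) (n : ℕ) (hn : 1 ≤ n) :
    ∃ e : SmashPow (Smash K X k0 x0) (Smash.pt k0 x0) n ≃
          Smash (SmashPow K k0 n) (SmashPow X x0 n)
            (SmashPow.pt K k0 n) (SmashPow.pt X x0 n),
      e (SmashPow.pt _ _ n) = Smash.pt _ _ ∧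
      ∀ (σ : Equiv.Perm (Fin n)) (z : SmashPow (Smash K X k0 x0) (Smash.pt k0 x0) n),
        e (SmashPow.perm σ z) =
          Smash.map (SmashPow.perm σ) (SmashPow.perm σ)
            (SmashPow.perm_pt k0 n σ) (SmashPow.perm_pt x0 n σ) (e z) := by
  let e := Equiv.ofSurjectiveOfEqIff _ _ (smashPowSmashMk_surjective k0 x0 n)
    (smashSmashPowMk_surjective k0 x0 n)
    fun _ _ => smashPowSmashMk_eq_iff.trans (smashSmashPowMk_eq_iff hn).symm
  refine ⟨e, Equiv.ofSurjectiveOfEqIff_apply fun _ => (k0, x0), fun σ z => ?_⟩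
  obtain ⟨f, rfl⟩ := smashPowSmashMk_surjective k0 x0 n z
  rw [smashPowSmashMk_comp_perm, Equiv.ofSurjectiveOfEqIff_apply,
    Equiv.ofSurjectiveOfEqIff_apply, smashSmashPowMk_comp_perm]
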